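/- Let Π_y = Π_{y∖l} + η·g·g^H where Π_{y∖l} is Hermitian positive definite, g ∈ ℂ^P nonzero, and η > −1/(g^H Π_{y∖l}^{-1} g) so that Π_y is positive definite. Setting the derivative with respect to η of f̄(η) = ln|Π_{y∖l} + η g g^H| + Tr((Π_{y∖l}+ηgg^H)^{-1} R_y) to zero yields the unique stationary point η̂ = (g^H Π_{y∖l}^{-1}(R_y − Π_{y∖l})Π_{y∖l}^{-1} g)/((g^H Π_{y∖l}^{-1} g)²). -/

import Mathlib

open Matrix Complex
open scoped ComplexOrder

/-!
Along the line `η ↦ Π_{y∖l} + η ggᴴ` the matrix determinant lemma and the Sherman–Morrison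
formula reduce the cost to the scalar function
`ln |Π_{y∖l}| + ln (1 + η c) + Tr(Π_{y∖l}⁻¹ R_y) - η b / (1 + η c)` with `c = gᴴΠ_{y∖l}⁻¹g > 0`
and `b = gᴴΠ_{y∖l}⁻¹R_yΠ_{y∖l}⁻¹g` real. Its derivative is `(c (1 + η c) - b) / (1 + η c)²`,
which vanishes exactly at `η = (b - c) / c²`.
-/

namespace Matrix

theorem IsHermitian.isSelfAdjoint_dotProduct_mulVec {n R : Type*} [Fintype n] [CommSemiring R]
    [StarRing R] {M : Matrix n n R} (hM : M.IsHermitian) (x : n → R) :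
    IsSelfAdjoint (star x ⬝ᵥ M *ᵥ x) := by
  show star (star x ⬝ᵥ M *ᵥ x) = star x ⬝ᵥ M *ᵥ x
  conv_rhs => rw [star_dotProduct, star_mulVec, hM.eq, ← dotProduct_mulVec]

variable {n K : Type*} [Fintype n] [DecidableEq n]

theorem det_add_vecMulVec [CommRing K] {A : Matrix n n K} (hA : IsUnit A.det) (u v : n → K) :
    (A + vecMulVec u v).det = A.det * (1 + v ⬝ᵥ A⁻¹ *ᵥ u) := by
  rw [vecMulVec_eq Unit, det_add_replicateCol_mul_replicateRow hA, Matrix.mul_assoc,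
    ← replicateCol_mulVec]
  congr 1
  simp [det_unique, replicateRow_mul_replicateCol_apply]

theorem inv_add_vecMulVec [Field K] {A : Matrix n n K} (hA : IsUnit A.det) {u v : n → K}
    (h : 1 + v ⬝ᵥ A⁻¹ *ᵥ u ≠ 0) :
    (A + vecMulVec u v)⁻¹ =
      A⁻¹ - (1 + v ⬝ᵥ A⁻¹ *ᵥ u)⁻¹ • vecMulVec (A⁻¹ *ᵥ u) (v ᵥ* A⁻¹) := by
  apply inv_eq_right_inv
  have hAu : A *ᵥ (A⁻¹ *ᵥ u) = u := by rw [mulVec_mulVec, mul_nonsing_inv A hA, one_mulVec]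
  rw [Matrix.add_mul, Matrix.mul_sub, Matrix.mul_sub, mul_nonsing_inv A hA, Matrix.mul_smul,
    Matrix.mul_smul, mul_vecMulVec A, hAu, vecMulVec_mul u v, vecMulVec_mul_vecMulVec,
    vecMulVec_smul]
  linear_combination (norm := module) -(inv_mul_cancel₀ h • vecMulVec u (v ᵥ* A⁻¹))

theorem trace_inv_add_vecMulVec_mul [Field K] {A : Matrix n n K} (hA : IsUnit A.det)
    {u v : n → K} (h : 1 + v ⬝ᵥ A⁻¹ *ᵥ u ≠ 0) (R : Matrix n n K) :
    ((A + vecMulVec u v)⁻¹ * R).trace =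
      (A⁻¹ * R).trace - (1 + v ⬝ᵥ A⁻¹ *ᵥ u)⁻¹ * (v ⬝ᵥ (A⁻¹ * R * A⁻¹) *ᵥ u) := by
  rw [inv_add_vecMulVec hA h, Matrix.sub_mul, trace_sub, Matrix.smul_mul, trace_smul,
    smul_eq_mul, vecMulVec_mul, trace_vecMulVec, dotProduct_comm (A⁻¹ *ᵥ u), vecMul_vecMul,
    ← dotProduct_mulVec, mulVec_mulVec]

end Matrix

/-- With `d = |Π_{y∖l}|`, `c = gᴴΠ_{y∖l}⁻¹g`, `b = gᴴΠ_{y∖l}⁻¹R_yΠ_{y∖l}⁻¹g` and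
`k = Tr(Π_{y∖l}⁻¹R_y)`, this is `f̄(t)`. -/
noncomputable def lineCost (d c b k t : ℝ) : ℝ :=
  Real.log (d * (1 + t * c)) + (k - t * b / (1 + t * c))

theorem hasDerivAt_lineCost {d c η : ℝ} (b k : ℝ) (hd : d ≠ 0) (hη : 1 + η * c ≠ 0) :
    HasDerivAt (lineCost d c b k) ((c * (1 + η * c) - b) / (1 + η * c) ^ 2) η := by
  have hlin : HasDerivAt (fun t : ℝ => 1 + t * c) c η := by
    simpa using ((hasDerivAt_id η).mul_const c).const_add 1
  have hlog := (hlin.const_mul d).log (mul_ne_zero hd hη)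
  have hfrac := (((hasDerivAt_id' η).mul_const b).div hlin hη).const_sub k
  refine (hlog.add hfrac).congr_deriv ?_
  field_simp
  ring

theorem deriv_lineCost_eq_zero_iff {d c η : ℝ} (b k : ℝ) (hd : d ≠ 0) (hc : c ≠ 0)
    (hη : 1 + η * c ≠ 0) :
    deriv (lineCost d c b k) η = 0 ↔ η = (b - c) / c ^ 2 := by
  rw [(hasDerivAt_lineCost b k hd hη).deriv, div_eq_zero_iff, or_iff_left (pow_ne_zero 2 hη),
    eq_div_iff (pow_ne_zero 2 hc)]
  constructor <;> intro h <;> linear_combination h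

theorem log_det_add_trace_inv_mul_eq_lineCost {P : ℕ} {A : Matrix (Fin P) (Fin P) ℂ}
    (hA : A.IsHermitian) (hdet : IsUnit A.det) (R : Matrix (Fin P) (Fin P) ℂ) (g : Fin P → ℂ)
    {t : ℝ}
    (ht : 1 + t * (star g ⬝ᵥ A⁻¹ *ᵥ g).re ≠ 0) :
    Real.log ((A + (t : ℂ) • vecMulVec g (star g)).det.re)
        + ((A + (t : ℂ) • vecMulVec g (star g))⁻¹ * R).trace.re =
      lineCost A.det.re (star g ⬝ᵥ A⁻¹ *ᵥ g).re (star g ⬝ᵥ (A⁻¹ * R * A⁻¹) *ᵥ g).re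
        (A⁻¹ * R).trace.re t := by
  have hcre : ((star g ⬝ᵥ A⁻¹ *ᵥ g).re : ℂ) = star g ⬝ᵥ A⁻¹ *ᵥ g :=
    conj_eq_iff_re.1 (hA.inv.isSelfAdjoint_dotProduct_mulVec g)
  have hs : 1 + star g ⬝ᵥ A⁻¹ *ᵥ ((t : ℂ) • g) =
      ((1 + t * (star g ⬝ᵥ A⁻¹ *ᵥ g).re : ℝ) : ℂ) := by
    rw [mulVec_smul, dotProduct_smul, smul_eq_mul]
    push_cast
    rw [hcre]
  rw [← smul_vecMulVec, det_add_vecMulVec hdet,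
    trace_inv_add_vecMulVec_mul hdet (by rw [hs]; exact_mod_cast ht), hs, mulVec_smul,
    dotProduct_smul, lineCost]
  congr 2
  · simp [mul_re]
  · rw [sub_re, ← ofReal_inv, ← real_smul, smul_re, smul_eq_mul, smul_eq_mul, re_ofReal_mul]
    ring

/-- Refined power estimate in the SBL direction refinement: for
`Π_y(η) = Π_{y∖l} + η g gᴴ` with `Π_{y∖l}` Hermitian positive definite, `g ≠ 0`,
`R_y` Hermitian, and `f̄(η) = ln|Π_y(η)| + Tr(Π_y(η)⁻¹ R_y)` (real parts of the
determinant and trace, which are real), on the range of `η` keeping `Π_y(η)`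
positive definite the derivative of `f̄` vanishes exactly at the unique
stationary point `η̂ = gᴴΠ_{y∖l}⁻¹(R_y − Π_{y∖l})Π_{y∖l}⁻¹g / (gᴴΠ_{y∖l}⁻¹g)²`. -/
theorem refined_power_stationary
    (P : ℕ) (A R : Matrix (Fin P) (Fin P) ℂ) (hA : A.PosDef) (hR : R.IsHermitian)
    (g : Fin P → ℂ) (hg : g ≠ 0) :
    ∀ η : ℝ,
      -1 / (star g ⬝ᵥ A⁻¹.mulVec g).re < η →
      (deriv (fun t : ℝ =>
          Real.log ((A + (t : ℂ) • Matrix.vecMulVec g (star g)).det.re)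
            + (((A + (t : ℂ) • Matrix.vecMulVec g (star g))⁻¹ * R).trace).re) η = 0
        ↔ (η : ℂ) =
            (star g ⬝ᵥ (A⁻¹ * (R - A) * A⁻¹).mulVec g)
              / (star g ⬝ᵥ A⁻¹.mulVec g) ^ 2) := by
  intro η hlt
  set c := star g ⬝ᵥ A⁻¹ *ᵥ g
  set b := star g ⬝ᵥ (A⁻¹ * R * A⁻¹) *ᵥ g
  have hc : 0 < c.re := (Complex.pos_iff.1 (hA.inv.dotProduct_mulVec_pos hg)).1
  have hdet : IsUnit A.det := isUnit_iff_ne_zero.2 hA.det_pos.ne'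
  have hM : (A⁻¹ * R * A⁻¹).IsHermitian := by
    simpa only [hA.1.inv.eq] using isHermitian_conjTranspose_mul_mul A⁻¹ hR
  have hbre : (b.re : ℂ) = b := conj_eq_iff_re.1 (hM.isSelfAdjoint_dotProduct_mulVec g)
  have hcre : (c.re : ℂ) = c := conj_eq_iff_re.1 (hA.1.inv.isSelfAdjoint_dotProduct_mulVec g)
  have hη : 0 < 1 + η * c.re := by
    rw [div_lt_iff₀ hc] at hlt
    linarith
  have hcost : (fun t : ℝ => Real.log ((A + (t : ℂ) • vecMulVec g (star g)).det.re)
        + ((A + (t : ℂ) • vecMulVec g (star g))⁻¹ * R).trace.re)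
      =ᶠ[nhds η] lineCost A.det.re c.re b.re (A⁻¹ * R).trace.re := by
    have hcont : Continuous fun t : ℝ => 1 + t * c.re := by fun_prop
    filter_upwards [hcont.continuousAt.eventually_ne hη.ne'] with t ht
    exact log_det_add_trace_inv_mul_eq_lineCost hA.1 hdet R g ht
  have hnum : star g ⬝ᵥ (A⁻¹ * (R - A) * A⁻¹) *ᵥ g = b - c := by
    rw [Matrix.mul_sub, Matrix.sub_mul, nonsing_inv_mul A hdet, Matrix.one_mul, sub_mulVec,
      dotProduct_sub]
  rw [hcost.deriv_eq,
    deriv_lineCost_eq_zero_iff _ _ (Complex.pos_iff.1 hA.det_pos).1.ne' hc.ne' hη.ne', hnum,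
    ← hcre, ← hbre]
  norm_cast
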